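/- arXiv:2108.11495 — 3 statements merged into one kernel-verified Lean document; each statement's English description precedes it below -/
import Mathlib

section
/- For every natural number i, the number of i-bit binary signed-digit representations of 1 equals i; that is, f(1,i) = i. Equivalently, c(2^i - 1) = i for i ≥ 1. -/
/-- Number of `i`-bit binary signed-digit representations of the integer `n`. -/
noncomputable def numBSD (n : ℤ) (i : ℕ) : ℕ :=
  Nat.card {b : Fin i → ℤ //
    (∀ j, b j = -1 ∨ b j = 0 ∨ b j = 1) ∧ n = ∑ j, b j * 2 ^ (j : ℕ)}

/-- Stern's diatomic sequence: `c 0 = 0`, `c 1 = 1`, `c (2m) = c m`,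
`c (2m+1) = c m + c (m+1)`. -/
def stern : ℕ → ℕ
  | 0 => 0
  | 1 => 1
  | n + 2 =>
    if h : n % 2 = 0 then stern (n / 2 + 1)
    else stern (n / 2 + 1) + stern (n / 2 + 2)
decreasing_by all_goals omega

lemma sum_decomp (n : ℕ) (b : Fin (n+1) → ℤ) :
    ∑ j : Fin (n+1), b j * 2 ^ (j:ℕ)
      = b 0 + 2 * ∑ j : Fin n, b j.succ * 2 ^ (j:ℕ) := by
  rw [Fin.sum_univ_succ, Finset.mul_sum]
  simp only [Fin.val_zero, pow_zero, mul_one, Fin.val_succ, pow_succ]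
  congr 1
  refine Finset.sum_congr rfl fun j _ => ?_
  ring

lemma zero_rep : ∀ (i : ℕ) (b : Fin i → ℤ),
    (∀ j, b j = -1 ∨ b j = 0 ∨ b j = 1) →
    (∑ j, b j * 2 ^ (j:ℕ)) = 0 → ∀ j, b j = 0 := by
  intro i
  induction i with
  | zero => intro b _ _ j; exact absurd j.2 (by omega)
  | succ n ih =>
    intro b hd hs
    rw [sum_decomp] at hs
    have hb0 := hd 0
    have h0 : b 0 = 0 ∧ (∑ j : Fin n, b j.succ * 2 ^ (j:ℕ)) = 0 := by
      constructor <;> omega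
    have htail := ih (fun j => b j.succ) (fun j => hd j.succ) h0.2
    intro j
    induction j using Fin.cases with
    | zero => exact h0.1
    | succ j => exact htail j

lemma one_rep : ∀ (i : ℕ) (b : Fin i → ℤ),
    (∀ j, b j = -1 ∨ b j = 0 ∨ b j = 1) →
    (∑ j, b j * 2 ^ (j:ℕ)) = 1 →
    ∃ k : ℕ, k < i ∧ ∀ j : Fin i,
      b j = if (j:ℕ) = k then 1 else if (j:ℕ) < k then -1 else 0 := by
  intro i
  induction i with
  | zero => intro b _ hs; simp at hs
  | succ n ih =>
    intro b hd hs
    rw [sum_decomp] at hs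
    have hb0 := hd 0
    rcases hb0 with h | h | h
    · -- b 0 = -1, tail represents 1
      have hS : (∑ j : Fin n, b j.succ * 2 ^ (j:ℕ)) = 1 := by omega
      obtain ⟨k, hk, hkf⟩ := ih (fun j => b j.succ) (fun j => hd j.succ) hS
      refine ⟨k + 1, by omega, fun j => ?_⟩
      induction j using Fin.cases with
      | zero => simp [h]
      | succ j =>
        have h3 : b j.succ = if (j:ℕ) = k then 1 else if (j:ℕ) < k then -1 else 0 :=
          hkf j
        simp only [Fin.val_succ]
        rw [h3]
        split_ifs <;> omega
    · -- b 0 = 0 impossible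
      omega
    · -- b 0 = 1, tail represents 0
      have hS : (∑ j : Fin n, b j.succ * 2 ^ (j:ℕ)) = 0 := by omega
      have htail := zero_rep n (fun j => b j.succ) (fun j => hd j.succ) hS
      refine ⟨0, by omega, fun j => ?_⟩
      induction j using Fin.cases with
      | zero => simpa using h
      | succ j =>
        have h3 : b j.succ = 0 := htail j
        simp only [Fin.val_succ]
        rw [h3]
        simp

lemma sum_g : ∀ (i k : ℕ), k < i →
    ∑ j : Fin i, (if (j:ℕ) = k then (1:ℤ) else if (j:ℕ) < k then -1 else 0)
      * 2 ^ (j:ℕ) = 1 := by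
  intro i
  induction i with
  | zero => omega
  | succ n ih =>
    intro k hk
    rw [Fin.sum_univ_succ]
    cases k with
    | zero =>
      simp
    | succ k' =>
      have htail : ∑ j : Fin n,
          (if ((j.succ : Fin (n+1)) : ℕ) = k' + 1 then (1:ℤ)
            else if ((j.succ : Fin (n+1)) : ℕ) < k' + 1 then -1 else 0)
            * 2 ^ ((j.succ : Fin (n+1)) : ℕ)
          = 2 * ∑ j : Fin n,
              (if (j:ℕ) = k' then (1:ℤ) else if (j:ℕ) < k' then -1 else 0)
                * 2 ^ (j:ℕ) := by
        rw [Finset.mul_sum]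
        refine Finset.sum_congr rfl fun j _ => ?_
        simp only [Fin.val_succ, pow_succ]
        have h1 : ((j:ℕ) + 1 = k' + 1) ↔ ((j:ℕ) = k') := by omega
        have h2 : ((j:ℕ) + 1 < k' + 1) ↔ ((j:ℕ) < k') := by omega
        rw [if_congr h1 rfl rfl, if_congr h2 rfl rfl]
        ring
      rw [htail, ih k' (by omega)]
      norm_num

lemma stern_two_mul (m : ℕ) : stern (2 * m + 2) = stern (m + 1) := by
  rw [stern]
  simp [Nat.mul_mod_right, Nat.mul_div_cancel_left]

lemma stern_odd (m : ℕ) : stern (2 * m + 3) = stern (m + 1) + stern (m + 2) := by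
  have : 2 * m + 3 = (2 * m + 1) + 2 := by omega
  rw [this, stern]
  have h : (2 * m + 1) % 2 = 1 := by omega
  have h2 : (2 * m + 1) / 2 = m := by omega
  simp [h, h2]

lemma stern_pow (i : ℕ) : stern (2 ^ i) = 1 := by
  induction i with
  | zero => simp [stern]
  | succ n ih =>
    have h1 : 1 ≤ 2 ^ n := Nat.one_le_two_pow
    have : 2 ^ (n + 1) = 2 * (2 ^ n - 1) + 2 := by
      rw [pow_succ]; omega
    rw [this, stern_two_mul, Nat.sub_add_cancel h1, ih]

lemma stern_pred_pow : ∀ i : ℕ, 1 ≤ i → stern (2 ^ i - 1) = i := by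
  intro i
  induction i with
  | zero => omega
  | succ n ih =>
    intro _
    rcases Nat.eq_zero_or_pos n with h | h
    · subst h; norm_num [stern]
    · have h1 : 2 ≤ 2 ^ n := by
        calc 2 = 2 ^ 1 := rfl
        _ ≤ 2 ^ n := Nat.pow_le_pow_right (by omega) h
      have : 2 ^ (n + 1) - 1 = 2 * (2 ^ n - 2) + 3 := by
        rw [pow_succ]; omega
      rw [this, stern_odd]
      have e1 : 2 ^ n - 2 + 1 = 2 ^ n - 1 := by omega
      have e2 : 2 ^ n - 2 + 2 = 2 ^ n := by omega
      rw [e1, e2, stern_pow, ih h]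

theorem bsd_one (i : ℕ) :
    numBSD 1 i = i ∧ (1 ≤ i → stern (2 ^ i - 1) = i) := by
  refine ⟨?_, stern_pred_pow i⟩
  have hcard : Nat.card (Fin i) = i := by simp
  unfold numBSD
  conv_rhs => rw [← hcard]
  refine (Nat.card_eq_of_bijective
    (fun k : Fin i => (⟨fun j => if (j:ℕ) = (k:ℕ) then 1
        else if (j:ℕ) < (k:ℕ) then -1 else 0, ?_, ?_⟩ :
      {b : Fin i → ℤ //
        (∀ j, b j = -1 ∨ b j = 0 ∨ b j = 1) ∧
          (1:ℤ) = ∑ j, b j * 2 ^ (j : ℕ)})) ?_).symm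
  · intro j
    dsimp only
    split_ifs <;> norm_num
  · exact (sum_g i k k.2).symm
  · constructor
    · intro k k' hkk'
      have hfun := congrArg Subtype.val hkk'
      have h := congrFun hfun ⟨(k:ℕ), k.2⟩
      apply Fin.ext
      dsimp only at h
      rw [if_pos rfl] at h
      split_ifs at h <;> omega
    · rintro ⟨b, hd, hs⟩
      obtain ⟨k, hk, hkf⟩ := one_rep i b hd hs.symm
      refine ⟨⟨k, hk⟩, ?_⟩
      apply Subtype.ext
      funext j
      exact (hkf j).symm
end

section
/- For every natural number i and every integer n, the number of i-bit binary signed-digit representations of n is at most the (i+1)-st Fibonacci number: f(n,i) ≤ F_{i+1}. Moreover, this bound is attained: the unique integer n with 3n = 2^i - (-1)^i satisfies f(n,i) = F_{i+1}. -/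
def gBSD : ℕ → ℤ → ℕ
  | 0, n => if n = 0 then 1 else 0
  | i+1, n => if 2 ∣ n then gBSD i (n/2) else gBSD i ((n-1)/2) + gBSD i ((n+1)/2)

instance finBSD (n : ℤ) (i : ℕ) :
    Finite {b : Fin i → ℤ //
      (∀ j, b j = -1 ∨ b j = 0 ∨ b j = 1) ∧ n = ∑ j, b j * 2 ^ (j : ℕ)} := by
  apply Finite.of_injective
    (fun s (j : Fin i) => (⟨(s.1 j + 1).toNat, by rcases s.2.1 j with h|h|h <;> simp [h]⟩ : Fin 3))
  intro s t h
  ext j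
  have hj := congrFun h j
  simp only [Fin.mk.injEq] at hj
  rcases s.2.1 j with h1|h1|h1 <;> rcases t.2.1 j with h2|h2|h2 <;> omega

lemma sum_split {i : ℕ} (b : Fin (i+1) → ℤ) :
    ∑ j, b j * 2 ^ (j : ℕ) = b 0 + 2 * ∑ j : Fin i, b j.succ * 2 ^ (j : ℕ) := by
  rw [Fin.sum_univ_succ]
  simp only [Fin.val_zero, pow_zero, mul_one, Fin.val_succ, Finset.mul_sum]
  congr 1
  refine Finset.sum_congr rfl fun j _ => ?_
  rw [pow_succ]; ring

lemma numBSD_zero (n : ℤ) : numBSD n 0 = if n = 0 then 1 else 0 := by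
  unfold numBSD
  split
  · rename_i h
    subst h
    have : Unique {b : Fin 0 → ℤ //
        (∀ j, b j = -1 ∨ b j = 0 ∨ b j = 1) ∧ (0:ℤ) = ∑ j, b j * 2 ^ (j : ℕ)} := by
      refine ⟨⟨⟨fun j => j.elim0, fun j => j.elim0, by simp⟩⟩, ?_⟩
      intro a
      ext j
      exact j.elim0
    exact Nat.card_unique
  · rename_i h
    rw [Nat.card_eq_zero]
    left
    refine ⟨?_⟩
    rintro ⟨b, -, hb⟩
    simp at hb
    exact h hb

lemma numBSD_succ (n : ℤ) (i : ℕ) :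
    numBSD n (i+1) = if 2 ∣ n then numBSD (n/2) i
      else numBSD ((n-1)/2) i + numBSD ((n+1)/2) i := by
  split
  · rename_i hev
    unfold numBSD
    apply Nat.card_congr
    refine ⟨fun b => ⟨Fin.tail b.1, fun j => b.2.1 j.succ, ?_⟩,
            fun b => ⟨Fin.cons 0 b.1, ?_, ?_⟩, ?_, ?_⟩
    · obtain ⟨b, hd, hs⟩ := b
      rw [sum_split] at hs
      have h0 : b 0 = 0 := by rcases hd 0 with h|h|h <;> omega
      rw [h0] at hs
      show n / 2 = ∑ j : Fin i, b j.succ * 2 ^ (j:ℕ)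
      omega
    · intro j
      refine Fin.cases ?_ ?_ j
      · simp
      · intro k
        simpa using b.2.1 k
    · rw [sum_split]
      simp only [Fin.cons_zero, Fin.cons_succ]
      have hs := b.2.2
      omega
    · intro b
      apply Subtype.ext
      have h0 : b.1 0 = 0 := by
        have hs := b.2.2
        rw [sum_split] at hs
        rcases b.2.1 0 with h|h|h <;> omega
      funext j
      refine Fin.cases ?_ ?_ j
      · simp [h0]
      · intro k
        simp [Fin.tail]
    · intro b
      apply Subtype.ext
      funext j
      simp [Fin.tail]
  · rename_i hodd
    unfold numBSD
    rw [← Nat.card_sum]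
    apply Nat.card_congr
    have key : ∀ b : {b : Fin (i+1) → ℤ //
        (∀ j, b j = -1 ∨ b j = 0 ∨ b j = 1) ∧ n = ∑ j, b j * 2 ^ (j : ℕ)},
        b.1 0 = 1 ∨ b.1 0 = -1 := by
      rintro ⟨b, hd, hs⟩
      rw [sum_split] at hs
      rcases hd 0 with h|h|h
      · right; exact h
      · exfalso
        apply hodd
        refine ⟨∑ j : Fin i, b j.succ * 2 ^ (j:ℕ), ?_⟩
        rw [h] at hs
        simpa using hs
      · left; exact h
    refine ⟨fun b => if h : b.1 0 = 1
        then Sum.inl ⟨Fin.tail b.1, fun j => b.2.1 j.succ, ?_⟩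
        else Sum.inr ⟨Fin.tail b.1, fun j => b.2.1 j.succ, ?_⟩,
      Sum.elim (fun b => ⟨Fin.cons 1 b.1, ?_, ?_⟩) (fun b => ⟨Fin.cons (-1) b.1, ?_, ?_⟩),
      ?_, ?_⟩
    · have hs := b.2.2
      rw [sum_split] at hs
      rw [h] at hs
      show (n-1)/2 = ∑ j : Fin i, Fin.tail b.1 j * 2 ^ (j:ℕ)
      unfold Fin.tail
      omega
    · have h1 : b.1 0 = -1 := (key b).resolve_left h
      have hs := b.2.2
      rw [sum_split, h1] at hs
      show (n+1)/2 = ∑ j : Fin i, Fin.tail b.1 j * 2 ^ (j:ℕ)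
      unfold Fin.tail
      omega
    · intro j
      refine Fin.cases ?_ ?_ j
      · simp
      · intro k
        simpa using b.2.1 k
    · rw [sum_split]
      simp only [Fin.cons_zero, Fin.cons_succ]
      have hs := b.2.2
      omega
    · intro j
      refine Fin.cases ?_ ?_ j
      · simp
      · intro k
        simpa using b.2.1 k
    · rw [sum_split]
      simp only [Fin.cons_zero, Fin.cons_succ]
      have hs := b.2.2
      omega
    · intro b
      dsimp only
      by_cases h : b.1 0 = 1
      · rw [dif_pos h]
        apply Subtype.ext
        funext j
        refine Fin.cases ?_ ?_ j
        · simp [h]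
        · intro k
          simp [Fin.tail]
      · rw [dif_neg h]
        have h1 : b.1 0 = -1 := (key b).resolve_left h
        apply Subtype.ext
        funext j
        refine Fin.cases ?_ ?_ j
        · simp [h1]
        · intro k
          simp [Fin.tail]
    · rintro (b | b)
      · dsimp only [Sum.elim_inl]
        rw [dif_pos (by simp : (Fin.cons (1:ℤ) b.1 : Fin (i+1) → ℤ) 0 = 1)]
        exact congrArg Sum.inl (Subtype.ext (funext fun j => by simp [Fin.tail]))
      · dsimp only [Sum.elim_inr]
        rw [dif_neg (by simp : ¬ (Fin.cons (-1:ℤ) b.1 : Fin (i+1) → ℤ) 0 = 1)]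
        exact congrArg Sum.inr (Subtype.ext (funext fun j => by simp [Fin.tail]))

lemma numBSD_eq_g : ∀ i (n : ℤ), numBSD n i = gBSD i n := by
  intro i
  induction i with
  | zero => intro n; rw [numBSD_zero]; rfl
  | succ i ih =>
    intro n
    rw [numBSD_succ, gBSD]
    split <;> simp [ih]

lemma g_bound (i : ℕ) :
    (∀ n : ℤ, gBSD i n ≤ Nat.fib (i+1)) ∧
    (∀ n : ℤ, gBSD i n + gBSD i (n+1) ≤ Nat.fib (i+2)) := by
  induction i with
  | zero =>
    constructor
    · intro n
      rw [gBSD]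
      split <;> simp
    · intro n
      rw [gBSD, gBSD]
      split <;> split <;> rename_i h1 h2 <;> simp <;> omega
  | succ i ih =>
    constructor
    · intro n
      rw [gBSD]
      split
      · exact le_trans (ih.1 _) Nat.fib_le_fib_succ
      · rename_i h
        rw [show (n+1)/2 = (n-1)/2 + 1 by omega]
        exact ih.2 _
    · intro n
      rw [gBSD, gBSD]
      by_cases h : 2 ∣ n
      · rw [if_pos h, if_neg (by omega)]
        rw [show (n+1-1)/2 = n/2 by omega, show (n+1+1)/2 = n/2 + 1 by omega]
        rw [Nat.fib_add_two (n := i+1)]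
        exact Nat.add_le_add (ih.1 _) (ih.2 _)
      · rw [if_neg h, if_pos (by omega)]
        rw [show (n+1)/2 = (n-1)/2 + 1 by omega]
        rw [Nat.fib_add_two (n := i+1), Nat.add_comm (Nat.fib (i+1))]
        exact Nat.add_le_add (ih.2 _) (ih.1 _)

lemma g_eq (i : ℕ) : ∀ n : ℤ, 3 * n = 2 ^ i - (-1) ^ i → gBSD i n = Nat.fib (i+1) := by
  induction i using Nat.strong_induction_on with
  | _ i ih =>
    match i with
    | 0 =>
      intro n hn
      norm_num at hn
      rw [hn, gBSD]
      simp
    | 1 =>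
      intro n hn
      have hn1 : n = 1 := by norm_num at hn; omega
      subst hn1
      rw [gBSD, if_neg (by decide)]
      norm_num [gBSD]
    | (i+2) =>
      intro n hn
      have ht : (0:ℤ) < 2 ^ i := by positivity
      have h2 : (2:ℤ) ^ (i+1) = 2 * 2 ^ i := by ring
      have h4 : (2:ℤ) ^ (i+2) = 4 * 2 ^ i := by ring
      rcases Nat.even_or_odd i with he | ho
      · have s0 : ((-1:ℤ)) ^ i = 1 := he.neg_one_pow
        have s1 : ((-1:ℤ)) ^ (i+1) = -1 := (he.add_one).neg_one_pow
        have s2 : ((-1:ℤ)) ^ (i+2) = 1 := by rw [pow_succ, s1]; ring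
        rw [s2, h4] at hn
        have hodd : ¬ (2 ∣ n) := by omega
        rw [gBSD, if_neg hodd]
        have e2 : gBSD (i+1) ((n+1)/2) = Nat.fib (i+2) := by
          apply ih (i+1) (by omega)
          rw [h2, s1]
          omega
        have hm1ev : 2 ∣ (n-1)/2 := by omega
        have e1 : gBSD (i+1) ((n-1)/2) = Nat.fib (i+1) := by
          rw [gBSD, if_pos hm1ev]
          apply ih i (by omega)
          rw [s0]
          omega
        rw [e1, e2, Nat.fib_add_two (n := i+1), Nat.add_comm]
      · have s0 : ((-1:ℤ)) ^ i = -1 := ho.neg_one_pow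
        have s1 : ((-1:ℤ)) ^ (i+1) = 1 := by rw [pow_succ, s0]; ring
        have s2 : ((-1:ℤ)) ^ (i+2) = -1 := by rw [pow_succ, s1]; ring
        rw [s2, h4] at hn
        have hodd : ¬ (2 ∣ n) := by omega
        rw [gBSD, if_neg hodd]
        have e1 : gBSD (i+1) ((n-1)/2) = Nat.fib (i+2) := by
          apply ih (i+1) (by omega)
          rw [h2, s1]
          omega
        have hm2ev : 2 ∣ (n+1)/2 := by omega
        have e2 : gBSD (i+1) ((n+1)/2) = Nat.fib (i+1) := by
          rw [gBSD, if_pos hm2ev]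
          apply ih i (by omega)
          rw [s0]
          omega
        rw [e1, e2, Nat.fib_add_two (n := i+1), Nat.add_comm]

theorem bsd_le_fib (i : ℕ) :
    (∀ n : ℤ, numBSD n i ≤ Nat.fib (i + 1)) ∧
    (∀ n : ℤ, 3 * n = 2 ^ i - (-1) ^ i → numBSD n i = Nat.fib (i + 1)) := by
  constructor
  · intro n
    rw [numBSD_eq_g]
    exact (g_bound i).1 n
  · intro n hn
    rw [numBSD_eq_g]
    exact g_eq i n hn
end

section
/- For all natural numbers k ≤ i, the number of i-bit binary signed-digit representations of 2^k - 1 equals 1 + (i-k)·k; that is, f(2^k - 1, i) = 1 + (i-k)·k. -/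
abbrev BSD (n : ℤ) (i : ℕ) := {b : Fin i → ℤ //
    (∀ j, b j = -1 ∨ b j = 0 ∨ b j = 1) ∧ n = ∑ j, b j * 2 ^ (j : ℕ)}

instance BSD.finite (n : ℤ) (i : ℕ) : Finite (BSD n i) := by
  have h : Finite {x : ℤ // x = -1 ∨ x = 0 ∨ x = 1} := by
    have hsub : {x : ℤ | x = -1 ∨ x = 0 ∨ x = 1} ⊆ ({-1, 0, 1} : Set ℤ) := by
      intro x hx; simpa using hx
    exact ((((Set.finite_singleton (1:ℤ)).insert 0).insert (-1)).subset hsub).to_subtype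
  exact Finite.of_injective
    (fun b : BSD n i => fun j => (⟨b.1 j, b.2.1 j⟩ : {x : ℤ // x = -1 ∨ x = 0 ∨ x = 1}))
    (by intro a b hab
        apply Subtype.ext
        funext j
        exact congrArg Subtype.val (congrFun hab j))

lemma sum_succ (i : ℕ) (b : Fin (i + 1) → ℤ) :
    ∑ j, b j * 2 ^ (j : ℕ) = b 0 + 2 * ∑ j : Fin i, b j.succ * 2 ^ (j : ℕ) := by
  rw [Fin.sum_univ_succ, Finset.mul_sum]
  simp only [Fin.val_zero, pow_zero, mul_one, Fin.val_succ, pow_succ]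
  congr 1
  exact Finset.sum_congr rfl fun x _ => by ring

lemma numBSD_even (m : ℤ) (i : ℕ) : numBSD (2 * m) (i + 1) = numBSD m i := by
  have key : ∀ b : BSD (2 * m) (i + 1), b.1 0 = 0 ∧ m = ∑ j : Fin i, b.1 j.succ * 2 ^ (j : ℕ) := by
    intro b
    have hs := b.2.2
    rw [sum_succ] at hs
    rcases b.2.1 0 with h | h | h <;> constructor <;> omega
  exact Nat.card_congr
    { toFun := fun b => ⟨Fin.tail b.1, fun j => b.2.1 j.succ, (key b).2⟩
      invFun := fun c => ⟨Fin.cons 0 c.1, by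
        constructor
        · intro j
          refine Fin.cases ?_ ?_ j
          · simp
          · intro j'; simpa using c.2.1 j'
        · rw [sum_succ]
          simp [Fin.tail]
          linarith [c.2.2]⟩
      left_inv := fun b => by
        apply Subtype.ext
        funext j
        refine Fin.cases ?_ ?_ j
        · simpa using (key b).1.symm
        · intro j'; simp [Fin.tail]
      right_inv := fun c => by
        apply Subtype.ext
        funext j
        simp [Fin.tail] }

lemma numBSD_odd (m : ℤ) (i : ℕ) :
    numBSD (2 * m + 1) (i + 1) = numBSD m i + numBSD (m + 1) i := by
  have key : ∀ b : BSD (2 * m + 1) (i + 1),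
      (b.1 0 = 1 ∧ m = ∑ j : Fin i, b.1 j.succ * 2 ^ (j : ℕ)) ∨
      (b.1 0 = -1 ∧ m + 1 = ∑ j : Fin i, b.1 j.succ * 2 ^ (j : ℕ)) := by
    intro b
    have hs := b.2.2
    rw [sum_succ] at hs
    rcases b.2.1 0 with h | h | h
    · right; constructor <;> omega
    · exfalso; omega
    · left; constructor <;> omega
  have e : BSD (2 * m + 1) (i + 1) ≃ BSD m i ⊕ BSD (m + 1) i :=
    { toFun := fun b =>
        if h : b.1 0 = 1 then
          Sum.inl ⟨Fin.tail b.1, fun j => b.2.1 j.succ, by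
            rcases key b with ⟨_, h2⟩ | ⟨h1, _⟩
            · exact h2
            · rw [h] at h1; norm_num at h1⟩
        else
          Sum.inr ⟨Fin.tail b.1, fun j => b.2.1 j.succ, by
            rcases key b with ⟨h1, _⟩ | ⟨_, h2⟩
            · exact absurd h1 h
            · exact h2⟩
      invFun := fun c =>
        match c with
        | Sum.inl c => ⟨Fin.cons 1 c.1, by
            constructor
            · intro j
              refine Fin.cases ?_ ?_ j
              · simp
              · intro j'; simpa using c.2.1 j'
            · rw [sum_succ]
              simp [Fin.tail]
              linarith [c.2.2]⟩
        | Sum.inr c => ⟨Fin.cons (-1) c.1, by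
            constructor
            · intro j
              refine Fin.cases ?_ ?_ j
              · simp
              · intro j'; simpa using c.2.1 j'
            · rw [sum_succ]
              simp [Fin.tail]
              linarith [c.2.2]⟩
      left_inv := fun b => by
        by_cases h : b.1 0 = 1
        · simp only [h, dif_pos]
          apply Subtype.ext
          funext j
          refine Fin.cases ?_ ?_ j
          · simpa using h.symm
          · intro j'; simp [Fin.tail]
        · simp only [h, dif_neg, not_false_iff]
          apply Subtype.ext
          simp only
          have hneg : b.1 0 = -1 := by
            rcases key b with ⟨h1, _⟩ | ⟨h1, _⟩
            · exact absurd h1 h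
            · exact h1
          funext j
          refine Fin.cases ?_ ?_ j
          · simpa using hneg.symm
          · intro j'; simp [Fin.tail]
      right_inv := fun c => by
        match c with
        | Sum.inl c =>
          have h1 : (Fin.cons 1 c.1 : Fin (i+1) → ℤ) 0 = 1 := by simp
          simp only [h1, dif_pos]
          congr 1
        | Sum.inr c =>
          have h1 : (Fin.cons (-1) c.1 : Fin (i+1) → ℤ) 0 = -1 := by simp
          have h2 : ¬ (Fin.cons (-1) c.1 : Fin (i+1) → ℤ) 0 = 1 := by rw [h1]; norm_num
          simp only [h2, dif_neg, not_false_iff]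
          congr 1 }
  calc numBSD (2 * m + 1) (i + 1) = Nat.card (BSD m i ⊕ BSD (m + 1) i) := Nat.card_congr e
    _ = numBSD m i + numBSD (m + 1) i := Nat.card_sum

lemma numBSD_zero_right (n : ℤ) (hn : n ≠ 0) : numBSD n 0 = 0 := by
  have : IsEmpty (BSD n 0) := ⟨fun b => hn (by simpa using b.2.2)⟩
  exact Nat.card_of_isEmpty

lemma numBSD_zero_s15 (i : ℕ) : numBSD 0 i = 1 := by
  induction i with
  | zero =>
    have h1 : Nonempty (BSD 0 0) := ⟨⟨fun j => j.elim0, fun j => j.elim0, by simp⟩⟩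
    have h2 : Subsingleton (BSD 0 0) := ⟨fun a b => Subtype.ext (funext fun j => j.elim0)⟩
    exact Nat.card_eq_one_iff_unique.2 ⟨h2, h1⟩
  | succ i ih =>
    have : (0 : ℤ) = 2 * 0 := by norm_num
    rw [show (0:ℤ) = 2 * 0 by norm_num, numBSD_even, ih]

lemma numBSD_one (i : ℕ) : numBSD 1 i = i := by
  induction i with
  | zero => exact numBSD_zero_right 1 one_ne_zero
  | succ i ih =>
    rw [show (1:ℤ) = 2 * 0 + 1 by norm_num, numBSD_odd]
    simp [numBSD_zero_s15, ih]
    omega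

lemma numBSD_pow (m : ℕ) : ∀ i, numBSD (2 ^ m) i = i - m := by
  induction m with
  | zero => intro i; simpa using numBSD_one i
  | succ m ih =>
    intro i
    cases i with
    | zero =>
      rw [numBSD_zero_right _ (by positivity)]
      omega
    | succ i =>
      rw [show (2:ℤ) ^ (m+1) = 2 * 2 ^ m by ring, numBSD_even, ih]
      omega

theorem bsd_two_pow_sub_one (k i : ℕ) (hk : k ≤ i) :
    numBSD ((2 : ℤ) ^ k - 1) i = 1 + (i - k) * k := by
  induction k generalizing i with
  | zero => simpa using numBSD_zero_s15 i
  | succ k ih =>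
    obtain ⟨i', rfl⟩ : ∃ i', i = i' + 1 := ⟨i - 1, by omega⟩
    have hk' : k ≤ i' := by omega
    rw [show (2:ℤ) ^ (k+1) - 1 = 2 * (2 ^ k - 1) + 1 by ring, numBSD_odd, ih i' hk',
      show (2:ℤ) ^ k - 1 + 1 = 2 ^ k by ring, numBSD_pow]
    have : (i' + 1 - (k + 1)) = i' - k := by omega
    rw [this, Nat.mul_succ]
    omega
end
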